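/- arXiv:2404.07881 — 2 statements merged into one kernel-verified Lean document; each statement's English description precedes it below -/
import Mathlib

section
/- Let α be a Fourier diagram with a hanging double edge: an unlabeled double edge {u, v} in which v is a non-root vertex of degree exactly 2. Let α₀ be α with the double edge and the vertex v removed, and α₂ be α with the double edge replaced by a single 2-labeled edge. Then for every n and every symmetric matrix A ∈ ℝ^{n×n}, Z_α = Z_{α₀} − ((|V(α)| − 1)/n)·Z_{α₀} + Z_{α₂} (as an identity of vectors in ℝⁿ). -/
set_option linter.unusedVariables false

open scoped Classical BigOperators

noncomputable section

/-! ### Fourier diagrams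

A Fourier diagram is a finite rooted multigraph, possibly carrying additional
"2-labeled" edges (`edges2`).  A plain (unlabeled) Fourier diagram is one with
`edges2 = 0`. -/

structure Diagram where
  V : Type
  fintypeV : Fintype V
  decEqV : DecidableEq V
  root : V
  edges : Multiset (Sym2 V)
  edges2 : Multiset (Sym2 V)

attribute [instance] Diagram.fintypeV Diagram.decEqV

/-- Symmetrized evaluation of a matrix entry on an unordered pair (agrees with
`A (φ a) (φ b)` whenever `A` is symmetric). -/
def sym2val {V : Type} {N : ℕ} (A : Matrix (Fin N) (Fin N) ℝ) (φ : V → Fin N) : Sym2 V → ℝ :=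
  Sym2.lift ⟨fun a b => (A (φ a) (φ b) + A (φ b) (φ a)) / 2, fun a b => by ring⟩

/-- Entry `i` of the vector `Z_α`: the sum over injective embeddings `φ` of the
vertices with `φ(root) = i` of the product of matrix entries over the edges
(a 2-labeled edge contributes `A² - 1/N`). -/
def Zv {N : ℕ} (A : Matrix (Fin N) (Fin N) ℝ) (α : Diagram) (i : Fin N) : ℝ :=
  ∑ φ : α.V → Fin N,
    if Function.Injective φ ∧ φ α.root = i then
      (α.edges.map (sym2val A φ)).prod *
        (α.edges2.map fun e => sym2val A φ e ^ 2 - 1 / (N : ℝ)).prod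
    else 0

namespace Diagram

/-- All edges, with 2-labeled edges counted once. -/
def allE (α : Diagram) : Multiset (Sym2 α.V) := α.edges + α.edges2

/-- No vertex other than the root is isolated. -/
def NoIsolated (α : Diagram) : Prop := ∀ v : α.V, v ≠ α.root → ∃ e ∈ α.allE, v ∈ e

/-- `|E(α)|`, counting 2-labeled edges twice. -/
def nE (α : Diagram) : ℕ := Multiset.card α.edges + 2 * Multiset.card α.edges2

/-- `I(α)`: non-root vertices all of whose incident edges have multiplicity `≥ 2`
or are self-loops (2-labeled edges being treated as single ordinary edges). -/
def I (α : Diagram) : Finset α.V :=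
  Finset.univ.filter fun v =>
    v ≠ α.root ∧ ∀ e ∈ α.allE, v ∈ e → (2 ≤ α.allE.count e ∨ e.IsDiag)

/-- The combinatorial quantity `|V(α)| - 1 - |E(α)| + |I(α)|`. -/
def Dval (α : Diagram) : ℤ :=
  (Fintype.card α.V : ℤ) - 1 - (α.nE : ℤ) + (α.I.card : ℤ)

/-- The underlying simple graph of a diagram. -/
def graph (α : Diagram) : SimpleGraph α.V := SimpleGraph.fromEdgeSet {e | e ∈ α.allE}

/-- Connectivity of the diagram (as a multigraph). -/
def Conn (α : Diagram) : Prop := α.graph.Connected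

/-- A proper diagram: no repeated edges, no self-loops and no 2-labeled edges. -/
def Proper (α : Diagram) : Prop :=
  α.edges.Nodup ∧ (∀ e ∈ α.edges, ¬ e.IsDiag) ∧ α.edges2 = 0

/-- A (rooted) tree diagram: an element of `𝒯`. -/
def IsTree (α : Diagram) : Prop := α.Proper ∧ α.graph.Connected ∧ α.graph.IsAcyclic

/-- Degree of the root (as a multigraph). -/
def rootDeg (α : Diagram) : ℕ := Multiset.card (α.edges.filter fun e => α.root ∈ e)

/-- Membership in `𝒮`: a rooted tree whose root has degree exactly 1. -/
def InS (α : Diagram) : Prop := α.IsTree ∧ α.rootDeg = 1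

/-- The root has degree exactly one, with (unique) neighbour `c`. -/
def RootDeg1 (α : Diagram) : Prop :=
  ∃ c : α.V, c ≠ α.root ∧ α.edges.filter (fun e => α.root ∈ e) = {s(α.root, c)}

end Diagram

/-- Isomorphism of rooted diagrams. -/
def DiagIso (α β : Diagram) : Prop :=
  ∃ g : α.V ≃ β.V, g α.root = β.root ∧ α.edges.map (Sym2.map ⇑g) = β.edges ∧
    α.edges2.map (Sym2.map ⇑g) = β.edges2

/-- `|Aut(α)|`: the number of root-fixing automorphisms of `α`. -/
def autCard (α : Diagram) : ℕ :=
  Nat.card {g : Equiv.Perm α.V // g α.root = α.root ∧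
    α.edges.map (Sym2.map ⇑g) = α.edges ∧ α.edges2.map (Sym2.map ⇑g) = α.edges2}

/-! ### Combinatorial negligibility and asymptotic equality `≐` -/

/-- `a = Θ(n^{-j/2})`. -/
def IsThetaHalf (a : ℕ → ℝ) (j : ℕ) : Prop :=
  ∃ c₁ c₂ : ℝ, 0 < c₁ ∧ 0 < c₂ ∧ ∀ n : ℕ, 1 ≤ n →
    c₁ * (n : ℝ) ^ (-(j : ℝ) / 2) ≤ |a n| ∧ |a n| ≤ c₂ * (n : ℝ) ^ (-(j : ℝ) / 2)

/-- The term `a_n · Z_α` is combinatorially negligible. -/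
def NegligibleTerm (a : ℕ → ℝ) (α : Diagram) : Prop :=
  (∀ n, a n = 0) ∨ ∃ j : ℕ, IsThetaHalf a j ∧ α.Dval ≤ (j : ℤ) - 1

/-- The term `a_n · Z_α` has combinatorial order 1. -/
def Order1Term (a : ℕ → ℝ) (α : Diagram) : Prop :=
  ∃ j : ℕ, IsThetaHalf a j ∧ α.Dval = (j : ℤ)

/-- A (vector-valued) diagram expression: a finite sum of terms `a_n · Z_α`. -/
abbrev DiagExpr : Type 1 := List ((ℕ → ℝ) × Diagram)

def DiagExpr.eval (z : DiagExpr) {N : ℕ} (A : Matrix (Fin N) (Fin N) ℝ) (i : Fin N) : ℝ :=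
  (z.map fun p => p.1 N * Zv A p.2 i).sum

def DiagExpr.Negligible (z : DiagExpr) : Prop := ∀ p ∈ z, NegligibleTerm p.1 p.2

/-- Asymptotic equality `x ≐ y` of two vector-valued quantities: the difference is
(identically, for every symmetric input matrix) a sum of combinatorially
negligible diagram terms. -/
def AsympEqV (x y : (N : ℕ) → Matrix (Fin N) (Fin N) ℝ → Fin N → ℝ) : Prop :=
  ∃ z : DiagExpr, DiagExpr.Negligible z ∧
    ∀ (N : ℕ) (A : Matrix (Fin N) (Fin N) ℝ), A.IsSymm → ∀ i : Fin N,
      x N A i - y N A i = DiagExpr.eval z A i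

/-- `≐` for diagram expressions. -/
def AsympEqE (x y : DiagExpr) : Prop :=
  AsympEqV (fun _ A i => DiagExpr.eval x A i) (fun _ A i => DiagExpr.eval y A i)

/-! ### Scalar diagrams -/

structure SDiagram where
  V : Type
  fintypeV : Fintype V
  decEqV : DecidableEq V
  edges : Multiset (Sym2 V)
  edges2 : Multiset (Sym2 V)

attribute [instance] SDiagram.fintypeV SDiagram.decEqV

def Zs {N : ℕ} (A : Matrix (Fin N) (Fin N) ℝ) (α : SDiagram) : ℝ :=
  ∑ φ : α.V → Fin N,
    if Function.Injective φ then
      (α.edges.map (sym2val A φ)).prod *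
        (α.edges2.map fun e => sym2val A φ e ^ 2 - 1 / (N : ℝ)).prod
    else 0

namespace SDiagram

def allE (α : SDiagram) : Multiset (Sym2 α.V) := α.edges + α.edges2
def NoIsolated (α : SDiagram) : Prop := ∀ v : α.V, ∃ e ∈ α.allE, v ∈ e
def nE (α : SDiagram) : ℕ := Multiset.card α.edges + 2 * Multiset.card α.edges2
def I (α : SDiagram) : Finset α.V :=
  Finset.univ.filter fun v => ∀ e ∈ α.allE, v ∈ e → (2 ≤ α.allE.count e ∨ e.IsDiag)
def Dval (α : SDiagram) : ℤ := (Fintype.card α.V : ℤ) - (α.nE : ℤ) + (α.I.card : ℤ)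
def graph (α : SDiagram) : SimpleGraph α.V := SimpleGraph.fromEdgeSet {e | e ∈ α.allE}
def Proper (α : SDiagram) : Prop :=
  α.edges.Nodup ∧ (∀ e ∈ α.edges, ¬ e.IsDiag) ∧ α.edges2 = 0
def IsTree (α : SDiagram) : Prop := α.Proper ∧ α.graph.Connected ∧ α.graph.IsAcyclic

end SDiagram

def SDiagIso (α β : SDiagram) : Prop :=
  ∃ g : α.V ≃ β.V, α.edges.map (Sym2.map ⇑g) = β.edges ∧
    α.edges2.map (Sym2.map ⇑g) = β.edges2

def autCardS (α : SDiagram) : ℕ :=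
  Nat.card {g : Equiv.Perm α.V //
    α.edges.map (Sym2.map ⇑g) = α.edges ∧ α.edges2.map (Sym2.map ⇑g) = α.edges2}

def NegligibleTermS (a : ℕ → ℝ) (α : SDiagram) : Prop :=
  (∀ n, a n = 0) ∨ ∃ j : ℕ, IsThetaHalf a j ∧ α.Dval ≤ (j : ℤ) - 1

abbrev SDiagExpr : Type 1 := List ((ℕ → ℝ) × SDiagram)

def SDiagExpr.eval (z : SDiagExpr) {N : ℕ} (A : Matrix (Fin N) (Fin N) ℝ) : ℝ :=
  (z.map fun p => p.1 N * Zs A p.2).sum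

def SDiagExpr.Negligible (z : SDiagExpr) : Prop := ∀ p ∈ z, NegligibleTermS p.1 p.2

/-- Asymptotic equality `x ≐ y` of two scalar quantities. -/
def AsympEqS (x y : (N : ℕ) → Matrix (Fin N) (Fin N) ℝ → ℝ) : Prop :=
  ∃ z : SDiagExpr, SDiagExpr.Negligible z ∧
    ∀ (N : ℕ) (A : Matrix (Fin N) (Fin N) ℝ), A.IsSymm → x N A - y N A = SDiagExpr.eval z A

/-! ### The Wigner matrix model -/

/-- Subgaussian distribution on `ℝ` (definition from the paper). -/
def Subgaussian (μ : MeasureTheory.Measure ℝ) : Prop :=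
  ∃ C : ℝ, 0 < C ∧ ∀ q : ℕ, ∫ x, |x| ^ q ∂μ ≤ C ^ q * (q : ℝ) ^ ((q : ℝ) / 2)

/-- The matrix model: `A(n)` is a random symmetric `n × n` matrix whose entries are
independent up to symmetry, with `√n · A_{ii} ~ μ₀` and `√n · A_{ij} ~ μ` (`i ≠ j`),
where `μ, μ₀` are subgaussian, centered, and `μ` has unit variance. -/
structure MatrixModel where
  Ω : Type
  [mΩ : MeasurableSpace Ω]
  P : MeasureTheory.Measure Ω
  [probP : MeasureTheory.IsProbabilityMeasure P]
  μ : MeasureTheory.Measure ℝ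
  μ₀ : MeasureTheory.Measure ℝ
  [probμ : MeasureTheory.IsProbabilityMeasure μ]
  [probμ₀ : MeasureTheory.IsProbabilityMeasure μ₀]
  subgμ : Subgaussian μ
  subgμ₀ : Subgaussian μ₀
  mean_zero : ∫ x, x ∂μ = 0
  mean_zero₀ : ∫ x, x ∂μ₀ = 0
  var_one : ∫ x, x ^ 2 ∂μ = 1
  A : (n : ℕ) → Ω → Matrix (Fin n) (Fin n) ℝ
  meas : ∀ (n : ℕ) (i j : Fin n), Measurable fun ω => A n ω i j
  symm : ∀ (n : ℕ) (ω : Ω), (A n ω).IsSymm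
  indep : ∀ n : ℕ, ProbabilityTheory.iIndepFun
    (fun (p : {p : Fin n × Fin n // p.1 ≤ p.2}) (ω : Ω) => A n ω p.1.1 p.1.2) P
  dist_diag : ∀ (n : ℕ) (i : Fin n),
    MeasureTheory.Measure.map (fun ω => Real.sqrt n * A n ω i i) P = μ₀
  dist_off : ∀ (n : ℕ) (i j : Fin n), i ≠ j →
    MeasureTheory.Measure.map (fun ω => Real.sqrt n * A n ω i j) P = μ

attribute [instance] MatrixModel.mΩ MatrixModel.probP MatrixModel.probμ MatrixModel.probμ₀

open MeasureTheory ProbabilityTheory Filter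

/-! ### Branches of trees, Hermite polynomials, and the asymptotic Gaussian space -/

/-- The diagram's graph with all edges incident to the root removed. -/
def Diagram.offRoot (α : Diagram) : SimpleGraph α.V := α.graph.deleteEdges {e | α.root ∈ e}

/-- The set of vertices belonging to the branch hanging at a root-neighbour `c`. -/
def Diagram.branchSet (α : Diagram) (c : α.V) : Set α.V := {v | α.offRoot.Reachable c v}

/-- The branch of `α` at a root-neighbour `c`, as a rooted diagram (the root is kept). -/
def Diagram.branchAt (α : Diagram) (c : α.V) : Diagram where
  V := {v : α.V // v = α.root ∨ v ∈ α.branchSet c}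
  fintypeV := Fintype.ofFinite _
  decEqV := inferInstance
  root := ⟨α.root, Or.inl rfl⟩
  edges := (α.edges.filter fun e => ∃ v, v ∈ e ∧ v ∈ α.branchSet c).map
    (Sym2.map fun v =>
      if h : v = α.root ∨ v ∈ α.branchSet c then
        (⟨v, h⟩ : {v : α.V // v = α.root ∨ v ∈ α.branchSet c})
      else ⟨α.root, Or.inl rfl⟩)
  edges2 := (α.edges2.filter fun e => ∃ v, v ∈ e ∧ v ∈ α.branchSet c).map
    (Sym2.map fun v =>
      if h : v = α.root ∨ v ∈ α.branchSet c then
        (⟨v, h⟩ : {v : α.V // v = α.root ∨ v ∈ α.branchSet c})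
      else ⟨α.root, Or.inl rfl⟩)

/-- `d_σ(τ)`: the number of branches of the root of `τ` isomorphic to `σ ∈ 𝒮`. -/
def dcount (τ σ : Diagram) : ℕ :=
  Nat.card {c : τ.V // τ.graph.Adj τ.root c ∧ DiagIso (τ.branchAt c) σ}

/-- The monic orthogonal (generalized Hermite) polynomials for `N(0, v)`:
`h_0 = 1`, `h_1 = x`, `h_{k+2} = x·h_{k+1} - v·(k+1)·h_k`. -/
def hermiteVar (v : ℝ) : ℕ → ℝ → ℝ
  | 0, _ => 1
  | 1, x => x
  | k + 2, x => x * hermiteVar v (k + 1) x - v * ((k : ℝ) + 1) * hermiteVar v k x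

/-- Given an enumeration `rep` of representatives of the isomorphism classes of `𝒮`
and a family `G` of corresponding (Gaussian) random variables, the asymptotic random
variable `Z_τ^∞ = ∏_σ h_{d_σ(τ)}(Z_σ^∞; |Aut σ|)` attached to a rooted tree `τ ∈ 𝒯`. -/
def ZinfTree {Ω' : Type} (rep : ℕ → Diagram) (G : ℕ → Ω' → ℝ) (τ : Diagram) (ω : Ω') : ℝ :=
  ∏ᶠ m : ℕ, hermiteVar (autCard (rep m)) (dcount τ (rep m)) (G m ω)

/-- `τ⁺`: extend the root by one edge. -/
def plusD (τ : Diagram) : Diagram where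
  V := Option τ.V
  fintypeV := inferInstance
  decEqV := inferInstance
  root := none
  edges := τ.edges.map (Sym2.map fun v => (some v : Option τ.V)) +
    {s((none : Option τ.V), some τ.root)}
  edges2 := τ.edges2.map (Sym2.map fun v => (some v : Option τ.V))

/-- `σ⁻` for a root of degree 1 with neighbour `c`: delete the root and its unique
edge, re-rooting at `c`. -/
def minusDAux (τ : Diagram) (c : τ.V) (hc : c ≠ τ.root) : Diagram where
  V := {v : τ.V // v ≠ τ.root}
  fintypeV := Fintype.ofFinite _
  decEqV := inferInstance
  root := ⟨c, hc⟩
  edges := (τ.edges.filter fun e => τ.root ∉ e).map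
    (Sym2.map fun v => if h : v = τ.root then (⟨c, hc⟩ : {v : τ.V // v ≠ τ.root}) else ⟨v, h⟩)
  edges2 := (τ.edges2.filter fun e => τ.root ∉ e).map
    (Sym2.map fun v => if h : v = τ.root then (⟨c, hc⟩ : {v : τ.V // v ≠ τ.root}) else ⟨v, h⟩)

/-- `τ⁻` (total version; meaningful when the root has degree exactly one). -/
def minusD (τ : Diagram) : Diagram :=
  if h : τ.RootDeg1 then minusDAux τ h.choose h.choose_spec.1 else τ

/-! ### Removal of hanging double edges -/

/-- Remove a hanging double edge `{u, v}` (where `v` is a hanging non-root vertex)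
together with the vertex `v`. -/
def rmHDE (α : Diagram) (u v : α.V) (huv : u ≠ v) (hv : v ≠ α.root) : Diagram where
  V := {w : α.V // w ≠ v}
  fintypeV := Fintype.ofFinite _
  decEqV := inferInstance
  root := ⟨α.root, fun h => hv h.symm⟩
  edges := (α.edges - Multiset.replicate 2 s(u, v)).map
    (Sym2.map fun w => if h : w = v then (⟨u, huv⟩ : {w : α.V // w ≠ v}) else ⟨w, h⟩)
  edges2 := α.edges2.map
    (Sym2.map fun w => if h : w = v then (⟨u, huv⟩ : {w : α.V // w ≠ v}) else ⟨w, h⟩)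

/-- Replace a hanging double edge `{u, v}` by a single 2-labeled edge. -/
def relabelHDE (α : Diagram) (u v : α.V) : Diagram :=
  { α with edges := α.edges - Multiset.replicate 2 s(u, v), edges2 := α.edges2 + {s(u, v)} }

/-- One step of deleting a hanging double edge (up to isomorphism). -/
def StepRemove (α β : Diagram) : Prop :=
  ∃ (u v : α.V) (huv : u ≠ v) (hv : v ≠ α.root),
    α.edges.count s(u, v) = 2 ∧ (∀ e ∈ α.edges, v ∈ e → e = s(u, v)) ∧
    (∀ e ∈ α.edges2, v ∉ e) ∧ DiagIso β (rmHDE α u v huv hv)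

/-- The asymptotic random variable `Z_α^∞` of a connected diagram `α`: if repeatedly
deleting hanging double edges transforms `α` into a rooted tree `τ ∈ 𝒯` then it is
`Z_τ^∞`, and otherwise it is `0`. -/
def ZinfGen {Ω' : Type} (rep : ℕ → Diagram) (G : ℕ → Ω' → ℝ) (α : Diagram) : Ω' → ℝ :=
  if h : ∃ τ : Diagram, Relation.ReflTransGen StepRemove α τ ∧ τ.IsTree then
    ZinfTree rep G h.choose
  else fun _ => 0

/-! ### Tree expressions -/

/-- A tree(-diagram) expression with coefficients independent of `n`. -/
abbrev TreeExpr : Type 1 := List (ℝ × Diagram)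

def TreeExpr.eval (x : TreeExpr) {N : ℕ} (A : Matrix (Fin N) (Fin N) ℝ) (i : Fin N) : ℝ :=
  (x.map fun p => p.1 * Zv A p.2 i).sum

/-- The asymptotic state attached to a tree expression. -/
def TreeExpr.inf {Ω' : Type} (rep : ℕ → Diagram) (G : ℕ → Ω' → ℝ) (x : TreeExpr) (ω : Ω') : ℝ :=
  (x.map fun p => p.1 * ZinfTree rep G p.2 ω).sum

/-- The linear operator `⁺` on tree expressions. -/
def TreeExpr.plusE (x : TreeExpr) : TreeExpr := x.map fun p => (p.1, plusD p.2)

/-- The linear operator `⁻` on tree expressions (trees whose root does not have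
degree one are sent to `0`). -/
def TreeExpr.minusE (x : TreeExpr) : TreeExpr :=
  x.flatMap fun p =>
    if h : p.2.RootDeg1 then [(p.1, minusDAux p.2 h.choose h.choose_spec.1)] else []

/-- The asymptotic Gaussian space: an enumeration `rep` of pairwise non-isomorphic
representatives of all isomorphism classes of `𝒮`, together with a family `G m i`
(`m` = class, `i` = coordinate) of independent centered Gaussians with variances
`|Aut(rep m)|`. -/
structure SRep {Ω' : Type} [MeasurableSpace Ω'] (P' : Measure Ω') (rep : ℕ → Diagram)
    (G : ℕ → ℕ → Ω' → ℝ) : Prop where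
  mem : ∀ m, (rep m).InS
  pairwise : ∀ m m', m ≠ m' → ¬ DiagIso (rep m) (rep m')
  complete : ∀ σ : Diagram, σ.InS → ∃ m, DiagIso σ (rep m)
  meas : ∀ m i, Measurable (G m i)
  dist : ∀ m i, Measure.map (G m i) P' = gaussianReal 0 (autCard (rep m) : NNReal)
  indep : iIndepFun (fun p : ℕ × ℕ => G p.1 p.2) P'

/-- As `SRep`, with a single coordinate. -/
structure SRep1 {Ω' : Type} [MeasurableSpace Ω'] (P' : Measure Ω') (rep : ℕ → Diagram)
    (G : ℕ → Ω' → ℝ) : Prop where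
  mem : ∀ m, (rep m).InS
  pairwise : ∀ m m', m ≠ m' → ¬ DiagIso (rep m) (rep m')
  complete : ∀ σ : Diagram, σ.InS → ∃ m, DiagIso σ (rep m)
  meas : ∀ m, Measurable (G m)
  dist : ∀ m, Measure.map (G m) P' = gaussianReal 0 (autCard (rep m) : NNReal)
  indep : iIndepFun G P'

/-! ### Products of tree diagrams by matchings of branches -/

/-- Index type of the branches of a family of rooted trees. -/
abbrev BIdx {q : ℕ} (τ : Fin q → Diagram) : Type := Σ j : Fin q, (τ j).V

/-- A partial matching of pairwise-isomorphic root-branches of `τ 0, …, τ (q-1)` with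
no two matched branches from the same tree. -/
def IsBMatch {q : ℕ} (τ : Fin q → Diagram) (M : Finset (Sym2 (BIdx τ))) : Prop :=
  (∀ p ∈ M, ¬ p.IsDiag) ∧
  (∀ p ∈ M, ∀ p' ∈ M, p ≠ p' → ∀ b : BIdx τ, b ∈ p → b ∉ p') ∧
  (∀ b b' : BIdx τ, s(b, b') ∈ M →
    b.1 ≠ b'.1 ∧ (τ b.1).graph.Adj (τ b.1).root b.2 ∧ (τ b'.1).graph.Adj (τ b'.1).root b'.2 ∧
      DiagIso ((τ b.1).branchAt b.2) ((τ b'.1).branchAt b'.2))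

/-- `|Aut(σ)|` for a matched pair of isomorphic branches. -/
def pairAut {q : ℕ} (τ : Fin q → Diagram) : Sym2 (BIdx τ) → ℕ :=
  Sym2.lift ⟨fun b b' => max (autCard ((τ b.1).branchAt b.2)) (autCard ((τ b'.1).branchAt b'.2)),
    fun b b' => max_comm _ _⟩

def matchCoeff {q : ℕ} (τ : Fin q → Diagram) (M : Finset (Sym2 (BIdx τ))) : ℝ :=
  ∏ p ∈ M, (pairAut τ p : ℝ)

/-- A vertex belonging to a matched (hence deleted) branch. -/
def BDeleted {q : ℕ} (τ : Fin q → Diagram) (M : Finset (Sym2 (BIdx τ))) (v : BIdx τ) : Prop :=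
  ∃ p ∈ M, ∃ c : (τ v.1).V, (⟨v.1, c⟩ : BIdx τ) ∈ p ∧ v.2 ∈ (τ v.1).branchSet c

/-- `τ_M`: merge the roots of `τ 0, …, τ (q-1)` and delete all branches matched in `M`. -/
def mergedTree {q : ℕ} (τ : Fin q → Diagram) (M : Finset (Sym2 (BIdx τ))) : Diagram where
  V := Option {v : BIdx τ // v.2 ≠ (τ v.1).root ∧ ¬ BDeleted τ M v}
  fintypeV := Fintype.ofFinite _
  decEqV := inferInstance
  root := none
  edges := (Finset.univ : Finset (Fin q)).val.bind fun j =>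
    ((τ j).edges.filter fun e => ∀ w, w ∈ e → w = (τ j).root ∨ ¬ BDeleted τ M ⟨j, w⟩).map
      (Sym2.map fun w =>
        if h : w ≠ (τ j).root ∧ ¬ BDeleted τ M ⟨j, w⟩ then
          (some ⟨⟨j, w⟩, h⟩ : Option {v : BIdx τ // v.2 ≠ (τ v.1).root ∧ ¬ BDeleted τ M v})
        else none)
  edges2 := 0

/-- The product of a list of tree diagrams (with coefficients), expanded over all
matchings of isomorphic root-branches. -/
def treeListProd (l : List (ℝ × Diagram)) : TreeExpr :=
  ((Finset.univ : Finset (Finset (Sym2 (BIdx fun j : Fin l.length => (l.get j).2)))).filter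
      (IsBMatch fun j : Fin l.length => (l.get j).2)).toList.map
    fun M => ((l.map Prod.fst).prod * matchCoeff _ M, mergedTree _ M)

def scaleTE (c : ℝ) (x : TreeExpr) : TreeExpr := x.map fun p => (c * p.1, p.2)

/-- Application of a polynomial to tree expressions, expanding each monomial via the
matching-product of tree diagrams. -/
def applyPoly {k : ℕ} (f : MvPolynomial (Fin k) ℝ) (xs : Fin k → TreeExpr) : TreeExpr :=
  f.support.toList.flatMap fun d =>
    (List.sections ((List.finRange k).flatMap fun s => List.replicate (d s) (xs s))).flatMap
      fun choice => scaleTE (MvPolynomial.coeff d f) (treeListProd choice)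

/-! ### General first-order methods -/

/-- One step of a GFOM: multiply by `A`, or apply a polynomial of the previous states
componentwise. -/
inductive GFOMStep : ℕ → Type where
  | matmul : {t : ℕ} → GFOMStep t
  | nonlin : {t : ℕ} → MvPolynomial (Fin (t + 1)) ℝ → GFOMStep t

/-- The state `x_t ∈ ℝⁿ` of a GFOM with input matrix `A`; in a `nonlin` step with
polynomial `f`, coordinate `s` of `f` receives `x_{t-s}`. -/
def gfomState {n : ℕ} (steps : (t : ℕ) → GFOMStep t) (A : Matrix (Fin n) (Fin n) ℝ) :
    ℕ → Fin n → ℝ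
  | 0 => fun _ => 1
  | t + 1 =>
    match steps t with
    | GFOMStep.matmul => A.mulVec (gfomState steps A t)
    | GFOMStep.nonlin f => fun i =>
        MvPolynomial.eval (fun s : Fin (t + 1) => gfomState steps A (t - (s : ℕ)) i) f
  termination_by t => t
  decreasing_by all_goals omega

/-- The singleton diagram (representing the all-ones vector). -/
def singletonD : Diagram where
  V := PUnit
  fintypeV := inferInstance
  decEqV := inferInstance
  root := PUnit.unit
  edges := 0
  edges2 := 0

/-- Multiplication by `A` on the trees: `Z_τ ↦ Z_{τ⁺} (+ Z_{τ⁻}` if `τ ∈ 𝒮)`. -/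
def stepMul (x : TreeExpr) : TreeExpr :=
  x.flatMap fun p =>
    (p.1, plusD p.2) ::
      (if h : p.2.RootDeg1 then [(p.1, minusDAux p.2 h.choose h.choose_spec.1)] else [])

/-- The tree approximation `x̂_t` of a GFOM: the GFOM operations performed on the
tree diagrams only. -/
def hatState (steps : (t : ℕ) → GFOMStep t) : ℕ → TreeExpr
  | 0 => [(1, singletonD)]
  | t + 1 =>
    match steps t with
    | GFOMStep.matmul => stepMul (hatState steps t)
    | GFOMStep.nonlin f => applyPoly f fun s : Fin (t + 1) => hatState steps (t - (s : ℕ))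
  termination_by t => t
  decreasing_by all_goals omega

/-! ### Belief propagation and approximate message passing -/

/-- Belief propagation messages `m^t_{i→j}` for the nonlinearities `f`; in `f t`,
coordinate `s ≤ t-1` receives `∑_{k≠j} A_{ik} m^{t-1-s}_{k→i}`, and the last
coordinate receives `m⁰ = 1`. -/
def bpMsg {n : ℕ} (f : (t : ℕ) → MvPolynomial (Fin (t + 1)) ℝ)
    (A : Matrix (Fin n) (Fin n) ℝ) : ℕ → Fin n → Fin n → ℝ
  | 0 => fun _ _ => 1
  | t + 1 => fun i j =>
      MvPolynomial.eval (fun s : Fin (t + 2) =>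
        if (s : ℕ) ≤ t then ∑ k ∈ Finset.univ.erase j, A i k * bpMsg f A (t - (s : ℕ)) k i
        else 1) (f (t + 1))
  termination_by t => t
  decreasing_by all_goals omega

/-- Belief propagation output `m^t_i`. -/
def bpOut {n : ℕ} (f ftil : (t : ℕ) → MvPolynomial (Fin (t + 1)) ℝ)
    (A : Matrix (Fin n) (Fin n) ℝ) (t : ℕ) (i : Fin n) : ℝ :=
  MvPolynomial.eval (fun s : Fin (t + 1) =>
    if (s : ℕ) < t then ∑ k, A i k * bpMsg f A (t - 1 - (s : ℕ)) k i else 1) (ftil t)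

/-- The AMP iterates `w^t` with Onsager correction; in `f t`, coordinate `s`
receives `w^{t-s}`. -/
def ampW {n : ℕ} (f : (t : ℕ) → MvPolynomial (Fin (t + 1)) ℝ)
    (A : Matrix (Fin n) (Fin n) ℝ) : ℕ → Fin n → ℝ
  | 0 => fun _ => 1
  | t + 1 => fun i =>
      A.mulVec (fun k =>
        MvPolynomial.eval (fun s : Fin (t + 1) => ampW f A (t - (s : ℕ)) k) (f t)) i -
      ∑ s : Fin (t + 1),
        (if 1 ≤ (s : ℕ) then
          ((1 / (n : ℝ)) * ∑ k : Fin n,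
            MvPolynomial.eval (fun r : Fin (t + 1) => ampW f A (t - (r : ℕ)) k)
              (MvPolynomial.pderiv (⟨t - (s : ℕ), by omega⟩ : Fin (t + 1)) (f t))) *
          MvPolynomial.eval
            (fun r : Fin (((s : ℕ) - 1) + 1) => ampW f A (((s : ℕ) - 1) - (r : ℕ)) i)
            (f ((s : ℕ) - 1))
        else 0)
  termination_by t => t
  decreasing_by all_goals omega

/-- The AMP output `m^t = f̃_t(w^t, …, w^0)`. -/
def ampOut {n : ℕ} (f ftil : (t : ℕ) → MvPolynomial (Fin (t + 1)) ℝ)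
    (A : Matrix (Fin n) (Fin n) ℝ) (t : ℕ) (i : Fin n) : ℝ :=
  MvPolynomial.eval (fun s : Fin (t + 1) => ampW f A (t - (s : ℕ)) i) (ftil t)

/-! ### Connected components of scalar diagrams -/

def SDiagram.compSet (ρ : SDiagram) (v : ρ.V) : Set ρ.V := {w | ρ.graph.Reachable v w}

/-- The connected component of `v` in `ρ` is isomorphic to the scalar diagram `τ`. -/
def CompIso (ρ : SDiagram) (v : ρ.V) (τ : SDiagram) : Prop :=
  ∃ ψ : τ.V → ρ.V, Function.Injective ψ ∧ Set.range ψ = ρ.compSet v ∧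
    τ.edges.map (Sym2.map ψ) = ρ.edges.filter (fun e => ∀ w ∈ e, w ∈ ρ.compSet v) ∧
    τ.edges2.map (Sym2.map ψ) = ρ.edges2.filter (fun e => ∀ w ∈ e, w ∈ ρ.compSet v)

/-- The number of connected components of `ρ` isomorphic to `τ`. -/
def compCount (ρ τ : SDiagram) : ℕ :=
  Nat.card {K : ρ.graph.ConnectedComponent //
    ∃ v : ρ.V, ρ.graph.connectedComponentMk v = K ∧ CompIso ρ v τ}

/-- The number of connected components of a scalar diagram. -/
def numComps (ρ : SDiagram) : ℕ := Nat.card ρ.graph.ConnectedComponent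

/-! ### Debiased power iteration -/

/-- Debiased power iteration: `x₀ = 1`, `x₁ = A·1`, `x_{t+2} = A·x_{t+1} - x_t`. -/
def dpi {n : ℕ} (A : Matrix (Fin n) (Fin n) ℝ) : ℕ → Fin n → ℝ
  | 0 => fun _ => 1
  | 1 => A.mulVec fun _ => 1
  | t + 2 => fun i => A.mulVec (dpi A (t + 1)) i - dpi A t i

/-- The path with `t` edges, rooted at one endpoint. -/
def pathD (t : ℕ) : Diagram where
  V := Fin (t + 1)
  fintypeV := inferInstance
  decEqV := inferInstance
  root := 0
  edges := (Finset.univ : Finset (Fin t)).val.map fun k =>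
    s((k.castSucc : Fin (t + 1)), (k.succ : Fin (t + 1)))
  edges2 := 0


/-- A term which is combinatorially negligible or of combinatorial order 1. -/
def TermOrderLE1 (p : (ℕ → ℝ) × Diagram) : Prop :=
  NegligibleTerm p.1 p.2 ∨ Order1Term p.1 p.2


/-! At an embedding `φ`, the summand of `Z_α` is `A_{φu,φv}² · W(φ)`, where `W(φ)` is the weight of
the remaining edges, and that of `Z_{α₂}` is `(A_{φu,φv}² - 1/n) · W(φ)`; hence
`Z_α - Z_{α₂} = (1/n) ∑_φ W(φ)`. As `v` lies on none of the remaining edges, `W(φ)` only depends on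
`φ` off `v`, and an injective embedding of `V(α) ∖ {v}` extends injectively to `V(α)` in exactly
`n - (|V(α)| - 1)` ways, so `∑_φ W(φ) = (n - |V(α)| + 1) · Z_{α₀}`. -/

open Function

theorem injective_funSplitAt_symm_iff {X Y : Type*} [DecidableEq X] {v : X} {y : Y}
    {ψ : {w // w ≠ v} → Y} :
    Injective ((Equiv.funSplitAt v Y).symm (y, ψ)) ↔ Injective ψ ∧ y ∉ Set.range ψ := by
  set φ := (Equiv.funSplitAt v Y).symm (y, ψ)
  have hφv : φ v = y := by simp [φ]
  have hφ : ∀ w (hw : w ≠ v), φ w = ψ ⟨w, hw⟩ := fun w hw => by simp [φ, hw]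
  constructor
  · intro hinj
    refine ⟨fun a b hab => Subtype.ext (hinj (by rw [hφ _ a.2, hφ _ b.2, hab])), ?_⟩
    rintro ⟨w, hw⟩
    exact w.2 (hinj (by rw [hφ _ w.2, hφv, hw]))
  · rintro ⟨hψ, hy⟩ a b hab
    by_cases ha : a = v <;> by_cases hb : b = v
    · rw [ha, hb]
    · subst ha
      rw [hφv, hφ b hb] at hab
      exact absurd ⟨_, hab.symm⟩ hy
    · subst hb
      rw [hφv, hφ a ha] at hab
      exact absurd ⟨_, hab⟩ hy
    · rw [hφ a ha, hφ b hb] at hab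
      exact congrArg Subtype.val (hψ hab)

theorem sum_injective_eq_sum_injective_restrict {X Y : Type*} [Fintype X] [DecidableEq X]
    [Fintype Y] [DecidableEq Y] (v : X) (F : ({w // w ≠ v} → Y) → ℝ) :
    ∑ φ : X → Y, (if Injective φ then F (fun w => φ w) else 0) =
      ∑ ψ : {w // w ≠ v} → Y,
        if Injective ψ then ((Fintype.card Y : ℝ) - Fintype.card {w // w ≠ v}) * F ψ else 0 := by
  rw [← (Equiv.funSplitAt v Y).symm.sum_comp, Fintype.sum_prod_type, Finset.sum_comm]
  refine Finset.sum_congr rfl fun ψ _ => ?_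
  have hrestrict : ∀ y, (fun w : {w // w ≠ v} => (Equiv.funSplitAt v Y).symm (y, ψ) w) = ψ :=
    fun y => funext fun w => by simp [w.2]
  simp only [injective_funSplitAt_symm_iff, hrestrict]
  by_cases hψ : Injective ψ
  · have hcard : (Finset.univ.filter fun y => y ∉ Set.range ψ).card =
        Fintype.card Y - Fintype.card {w // w ≠ v} := by
      have himage : (Finset.univ.filter fun y => y ∉ Set.range ψ) = (Finset.univ.image ψ)ᶜ := by
        ext; simp
      rw [himage, Finset.card_compl, Finset.card_image_of_injective _ hψ, Finset.card_univ]
    simp only [hψ, true_and, if_true]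
    rw [← Finset.sum_filter, Finset.sum_const, nsmul_eq_mul, hcard,
      Nat.cast_sub (Fintype.card_le_of_injective ψ hψ)]
  · simp [hψ]

section EdgeWeight

variable {V W : Type} {N : ℕ} (A : Matrix (Fin N) (Fin N) ℝ)

theorem sym2val_congr {φ φ' : V → Fin N} {e : Sym2 V} (h : ∀ w ∈ e, φ w = φ' w) :
    sym2val A φ e = sym2val A φ' e := by
  induction e using Sym2.ind with
  | _ a b => simp [sym2val, h a (Sym2.mem_mk_left a b), h b (Sym2.mem_mk_right a b)]

theorem sym2val_map (g : V → W) (ψ : W → Fin N) (e : Sym2 V) :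
    sym2val A ψ (Sym2.map g e) = sym2val A (ψ ∘ g) e := by
  induction e using Sym2.ind with
  | _ a b => simp [sym2val]

def edgeWeight (E E₂ : Multiset (Sym2 V)) (φ : V → Fin N) : ℝ :=
  (E.map (sym2val A φ)).prod * (E₂.map fun e => sym2val A φ e ^ 2 - 1 / (N : ℝ)).prod

theorem Zv_eq_sum_edgeWeight (α : Diagram) (i : Fin N) :
    Zv A α i = ∑ φ : α.V → Fin N,
      if Injective φ ∧ φ α.root = i then edgeWeight A α.edges α.edges2 φ else 0 :=
  rfl

theorem edgeWeight_congr {E E₂ : Multiset (Sym2 V)} {φ φ' : V → Fin N}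
    (hE : ∀ e ∈ E, ∀ w ∈ e, φ w = φ' w) (hE₂ : ∀ e ∈ E₂, ∀ w ∈ e, φ w = φ' w) :
    edgeWeight A E E₂ φ = edgeWeight A E E₂ φ' := by
  unfold edgeWeight
  congr 2
  · exact Multiset.map_congr rfl fun e he => sym2val_congr A (hE e he)
  · exact Multiset.map_congr rfl fun e he => by rw [sym2val_congr A (hE₂ e he)]

theorem edgeWeight_map (g : V → W) (E E₂ : Multiset (Sym2 V)) (ψ : W → Fin N) :
    edgeWeight A (E.map (Sym2.map g)) (E₂.map (Sym2.map g)) ψ = edgeWeight A E E₂ (ψ ∘ g) := by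
  simp only [edgeWeight, Multiset.map_map, Function.comp_def, sym2val_map]

theorem edgeWeight_add_replicate (E E₂ : Multiset (Sym2 V)) (n : ℕ) (e : Sym2 V)
    (φ : V → Fin N) :
    edgeWeight A (E + Multiset.replicate n e) E₂ φ = sym2val A φ e ^ n * edgeWeight A E E₂ φ := by
  simp only [edgeWeight, Multiset.map_add, Multiset.prod_add, Multiset.map_replicate,
    Multiset.prod_replicate]
  ring

theorem edgeWeight_add_singleton₂ (E E₂ : Multiset (Sym2 V)) (e : Sym2 V) (φ : V → Fin N) :
    edgeWeight A E (E₂ + {e}) φ = (sym2val A φ e ^ 2 - 1 / (N : ℝ)) * edgeWeight A E E₂ φ := by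
  simp only [edgeWeight, Multiset.map_add, Multiset.prod_add, Multiset.map_singleton,
    Multiset.prod_singleton]
  ring

end EdgeWeight

def mergeVertex {X : Type} [DecidableEq X] {u v : X} (huv : u ≠ v) (w : X) : {w // w ≠ v} :=
  if h : w = v then ⟨u, huv⟩ else ⟨w, h⟩

theorem mergeVertex_of_ne {X : Type} [DecidableEq X] {u v w : X} (huv : u ≠ v) (hw : w ≠ v) :
    mergeVertex huv w = ⟨w, hw⟩ :=
  dif_neg hw

section HangingDoubleEdge

variable {α : Diagram} {u v : α.V} {N : ℕ} (A : Matrix (Fin N) (Fin N) ℝ) (i : Fin N)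

theorem Zv_relabelHDE : Zv A (relabelHDE α u v) i = ∑ φ : α.V → Fin N,
    if Injective φ ∧ φ α.root = i then edgeWeight A (α.edges - Multiset.replicate 2 s(u, v))
      (α.edges2 + {s(u, v)}) φ else 0 :=
  rfl

theorem Zv_rmHDE (huv : u ≠ v) (hv : v ≠ α.root) :
    Zv A (rmHDE α u v huv hv) i = ∑ ψ : {w // w ≠ v} → Fin N,
      if Injective ψ ∧ ψ ⟨α.root, hv.symm⟩ = i then
        edgeWeight A (α.edges - Multiset.replicate 2 s(u, v)) α.edges2 (ψ ∘ mergeVertex huv)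
      else 0 := by
  -- `rmHDE` carries the `Fintype.ofFinite` instance, so the sums agree only up to instances.
  rw [Zv_eq_sum_edgeWeight]
  refine Finset.sum_congr ?_ fun ψ _ => ?_
  · congr 1
    exact Subsingleton.elim _ _
  · have hmap : edgeWeight A (rmHDE α u v huv hv).edges (rmHDE α u v huv hv).edges2 ψ = _ :=
      edgeWeight_map A (mergeVertex huv) (α.edges - Multiset.replicate 2 s(u, v)) α.edges2 ψ
    rw [hmap]
    congr 1

theorem Zv_sub_Zv_relabelHDE (hdouble : 2 ≤ α.edges.count s(u, v)) :
    Zv A α i - Zv A (relabelHDE α u v) i = 1 / (N : ℝ) * ∑ φ : α.V → Fin N,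
      if Injective φ ∧ φ α.root = i then
        edgeWeight A (α.edges - Multiset.replicate 2 s(u, v)) α.edges2 φ else 0 := by
  have hsplit : α.edges - Multiset.replicate 2 s(u, v) + Multiset.replicate 2 s(u, v) = α.edges :=
    tsub_add_cancel_of_le (Multiset.le_count_iff_replicate_le.1 hdouble)
  rw [Zv_eq_sum_edgeWeight, Zv_relabelHDE, ← Finset.sum_sub_distrib, Finset.mul_sum]
  refine Finset.sum_congr rfl fun φ _ => ?_
  split_ifs
  · rw [edgeWeight_add_singleton₂]
    nth_rw 1 [← hsplit]
    rw [edgeWeight_add_replicate]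
    ring
  · simp

theorem sum_edgeWeight_eq_mul_Zv_rmHDE (huv : u ≠ v) (hv : v ≠ α.root)
    (hdouble : α.edges.count s(u, v) = 2) (hdeg : ∀ e ∈ α.edges, v ∈ e → e = s(u, v))
    (hdeg2 : ∀ e ∈ α.edges2, v ∉ e) :
    ∑ φ : α.V → Fin N, (if Injective φ ∧ φ α.root = i then
        edgeWeight A (α.edges - Multiset.replicate 2 s(u, v)) α.edges2 φ else 0) =
      ((N : ℝ) - (Fintype.card α.V - 1 : ℕ)) * Zv A (rmHDE α u v huv hv) i := by
  set E₀ := α.edges - Multiset.replicate 2 s(u, v)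
  have hE₀ : ∀ e ∈ E₀, v ∉ e := by
    intro e he hve
    have hcount : E₀.count s(u, v) = 0 := by
      rw [Multiset.count_sub, hdouble, Multiset.count_replicate_self]
    rw [hdeg e (Multiset.mem_of_le tsub_le_self he) hve] at he
    exact Multiset.count_eq_zero.mp hcount he
  have hrestrict (φ : α.V → Fin N) {e : Sym2 α.V} (he : v ∉ e) (w : α.V) (hw : w ∈ e) :
      φ w = ((fun w => φ w : {w // w ≠ v} → Fin N) ∘ mergeVertex huv) w := by
    simp [mergeVertex_of_ne huv fun h : w = v => he (h ▸ hw)]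
  calc _ = ∑ φ : α.V → Fin N, if Injective φ then
        (if φ α.root = i then edgeWeight A E₀ α.edges2
          ((fun w => φ w : {w // w ≠ v} → Fin N) ∘ mergeVertex huv) else 0) else 0 :=
        Finset.sum_congr rfl fun φ _ => by
          rw [ite_and, edgeWeight_congr A (fun e he => hrestrict φ (hE₀ e he))
            (fun e he => hrestrict φ (hdeg2 e he))]
    _ = _ := by
        refine (sum_injective_eq_sum_injective_restrict v fun ψ => if ψ ⟨α.root, hv.symm⟩ = i
          then edgeWeight A E₀ α.edges2 (ψ ∘ mergeVertex huv) else 0).trans ?_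
        have hcard : Fintype.card {w // w ≠ v} = Fintype.card α.V - 1 := by
          simp [Fintype.card_subtype_compl]
        rw [Zv_rmHDE, Finset.mul_sum, Fintype.card_fin, hcard]
        refine Finset.sum_congr rfl fun ψ _ => ?_
        rw [ite_and]
        split_ifs <;> ring

end HangingDoubleEdge

theorem statement_11_general (α : Diagram) (u v : α.V) (huv : u ≠ v) (hv : v ≠ α.root)
    (hdouble : α.edges.count s(u, v) = 2)
    (hdeg : ∀ e ∈ α.edges, v ∈ e → e = s(u, v))
    (hdeg2 : ∀ e ∈ α.edges2, v ∉ e)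
    (N : ℕ) (A : Matrix (Fin N) (Fin N) ℝ) (i : Fin N) :
    Zv A α i = Zv A (rmHDE α u v huv hv) i -
        ((Fintype.card α.V - 1 : ℕ) : ℝ) / (N : ℝ) * Zv A (rmHDE α u v huv hv) i +
        Zv A (relabelHDE α u v) i := by
  have hN : (N : ℝ) ≠ 0 := Nat.cast_ne_zero.mpr i.pos.ne'
  have hdiff := Zv_sub_Zv_relabelHDE A i hdouble.ge
  rw [sum_edgeWeight_eq_mul_Zv_rmHDE A i huv hv hdouble hdeg hdeg2] at hdiff
  field_simp at hdiff ⊢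
  linarith

/-- exact identity for the removal of a hanging double edge. -/
theorem statement_11 (α : Diagram) (u v : α.V) (huv : u ≠ v) (hv : v ≠ α.root)
    (hdouble : α.edges.count s(u, v) = 2)
    (hdeg : ∀ e ∈ α.edges, v ∈ e → e = s(u, v))
    (hdeg2 : ∀ e ∈ α.edges2, v ∉ e)
    (N : ℕ) (A : Matrix (Fin N) (Fin N) ℝ) (hA : A.IsSymm) (i : Fin N) :
    Zv A α i = Zv A (rmHDE α u v huv hv) i -
        ((Fintype.card α.V - 1 : ℕ) : ℝ) / (N : ℝ) * Zv A (rmHDE α u v huv hv) i +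
        Zv A (relabelHDE α u v) i :=
  statement_11_general α u v huv hv hdouble hdeg hdeg2 N A i
end
end

section
/- Let α be a connected (possibly edge-labeled) Fourier diagram of size independent of n. Then Z_α (with coefficient a_n = 1) is either combinatorially negligible or of combinatorial order 1. Moreover, it is of combinatorial order 1 if and only if all of the following hold simultaneously: (i) every edge of α has multiplicity 1 or 2; (ii) α has no cycles (its underlying simple graph is a tree); (iii) the subgraph of multiplicity-1 edges, if nonempty, is connected and contains the root (equivalently, the multiplicity-2 edges form hanging trees); (iv) α has no self-loops and no 2-labeled edges. -/
set_option linter.unusedVariables false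

open scoped Classical BigOperators

noncomputable section

open MeasureTheory ProbabilityTheory Filter

/-
Fix a breadth-first spanning tree of `α` rooted at the root, with parent map `f`. Each non-root
vertex `v` owns the parent edge `s(v, f v)`, whose multiplicity is at least `2` when `v ∈ I(α)` and
at least `1` otherwise. Hence `|V| - 1 + |I| ≤ ∑ᵥ mult s(v, f v) ≤ |E|`, so the exponent is `≤ 0`.
Equality forces every slack to vanish: no 2-labeled edges (they count twice in `|E|`), no
self-loops, no edges besides the parent edges (so the graph is a tree), and each parent edge has
multiplicity exactly `2` or `1` according as its child lies in `I` or not. In a tree the last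
condition says that the multiplicity-one edges form a subtree through the root: a vertex outside
`I` climbs to the root along parent edges of multiplicity one, and conversely the unique path from
it to the root runs through its parent edge.
-/

open Finset Topology

namespace SimpleGraph

variable {V : Type*} {G : SimpleGraph V} {r : V} {f : V → V}

/-- The parent map of a breadth-first spanning tree of `G` rooted at `r`. -/
def IsParentMap (G : SimpleGraph V) (r : V) (f : V → V) : Prop :=
  ∀ v, v ≠ r → G.Adj v (f v) ∧ G.dist (f v) r + 1 = G.dist v r

theorem Connected.exists_isParentMap (hG : G.Connected) (r : V) : ∃ f, G.IsParentMap r f := by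
  suffices ∀ v, v ≠ r → ∃ u, G.Adj v u ∧ G.dist u r + 1 = G.dist v r by
    choose! f hf using this
    exact ⟨f, hf⟩
  intro v hv
  obtain ⟨p, hp⟩ := hG.exists_walk_length_eq_dist v r
  obtain ⟨u, huv, q, rfl⟩ := p.exists_eq_cons_of_ne hv
  obtain ⟨q', hq'⟩ := hG.exists_walk_length_eq_dist u r
  have hq := dist_le q
  have hq'' := dist_le (Walk.cons huv q')
  simp only [Walk.length_cons] at hp hq''
  exact ⟨u, huv, by omega⟩

namespace IsParentMap

theorem injOn_edge (hf : G.IsParentMap r f) : Set.InjOn (fun v => s(v, f v)) {v | v ≠ r} := by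
  intro v hv w hw h
  rcases Sym2.eq_iff.1 h with ⟨hvw, -⟩ | ⟨hvw, hwv⟩
  · exact hvw
  · have hv' := (hf v hv).2
    have hw' := (hf w hw).2
    rw [hwv] at hv'
    rw [← hvw] at hw'
    omega

theorem exists_isPath_mem_edges (hf : G.IsParentMap r f) (hG : G.Connected) {v : V}
    (hv : v ≠ r) : ∃ p : G.Walk v r, p.IsPath ∧ s(v, f v) ∈ p.edges := by
  obtain ⟨hadj, hdist⟩ := hf v hv
  obtain ⟨q, hq, hlen⟩ := hG.exists_path_of_dist (f v) r
  have hvq : v ∉ q.support := fun hmem => by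
    have := dist_le (q.dropUntil v hmem)
    have := q.length_dropUntil_le_length hmem
    omega
  exact ⟨Walk.cons hadj q, hq.cons hvq, by simp⟩

theorem mem_edges_of_isTree (hf : G.IsParentMap r f) (hT : G.IsTree) {v : V} (hv : v ≠ r)
    {p : G.Walk v r} (hp : p.IsPath) : s(v, f v) ∈ p.edges := by
  obtain ⟨q, hq, hmem⟩ := hf.exists_isPath_mem_edges hT.connected hv
  rwa [(hT.existsUnique_path v r).unique hp hq]

end IsParentMap

variable [Fintype V] [DecidableEq V]

def parentEdges (r : V) (f : V → V) : Finset (Sym2 V) :=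
  (univ.erase r).image fun v => s(v, f v)

namespace IsParentMap

theorem card_parentEdges (hf : G.IsParentMap r f) :
    #(parentEdges r f) = Fintype.card V - 1 := by
  rw [parentEdges, card_image_of_injOn, card_erase_of_mem (mem_univ r), card_univ]
  intro v hv w hw
  exact hf.injOn_edge (ne_of_mem_erase hv) (ne_of_mem_erase hw)

theorem parentEdges_subset [Fintype G.edgeSet] (hf : G.IsParentMap r f) :
    parentEdges r f ⊆ G.edgeFinset := by
  intro e he
  obtain ⟨v, hv, rfl⟩ := mem_image.1 he
  exact mem_edgeFinset.2 (hf v (ne_of_mem_erase hv)).1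

theorem isTree_iff [Fintype G.edgeSet] (hf : G.IsParentMap r f) (hG : G.Connected) :
    G.IsTree ↔ parentEdges r f = G.edgeFinset := by
  have hV : 0 < Fintype.card V := Fintype.card_pos_iff.2 ⟨r⟩
  have hcard := hf.card_parentEdges
  rw [isTree_iff_connected_and_card, Nat.card_eq_fintype_card, Nat.card_eq_fintype_card,
    ← edgeFinset_card]
  constructor
  · rintro ⟨-, h⟩
    exact eq_of_subset_of_card_le hf.parentEdges_subset (by omega)
  · intro h
    rw [← h]
    exact ⟨hG, by omega⟩

end IsParentMap

end SimpleGraph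

theorem isThetaHalf_one_iff {j : ℕ} : IsThetaHalf (fun _ => (1 : ℝ)) j ↔ j = 0 := by
  refine ⟨fun ⟨_, c, _, _, h⟩ => ?_, fun hj => ⟨1, 1, one_pos, one_pos, fun n _ => by simp [hj]⟩⟩
  by_contra hj
  have hlim : Tendsto (fun n : ℕ => c * (n : ℝ) ^ (-((j : ℝ) / 2))) atTop (𝓝 0) := by
    simpa using ((tendsto_rpow_neg_atTop (by positivity : 0 < (j : ℝ) / 2)).comp
      tendsto_natCast_atTop_atTop).const_mul c
  obtain ⟨n, hn, hn1⟩ :=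
    ((hlim.eventually (gt_mem_nhds one_pos)).and (eventually_ge_atTop 1)).exists
  have := (h n hn1).2
  rw [neg_div, abs_one] at this
  linarith

theorem order1Term_one_iff (α : Diagram) : Order1Term (fun _ => (1 : ℝ)) α ↔ α.Dval = 0 := by
  simp [Order1Term, isThetaHalf_one_iff]

theorem negligibleTerm_one_iff (α : Diagram) :
    NegligibleTerm (fun _ => (1 : ℝ)) α ↔ α.Dval ≤ -1 := by
  simp only [NegligibleTerm, isThetaHalf_one_iff, exists_eq_left]
  simp

namespace Diagram

open SimpleGraph

variable (α : Diagram) {f : α.V → α.V}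

def weight (v : α.V) : ℕ := if v ∈ α.I then 2 else 1

def OnMultOneEdge (v : α.V) : Prop := ∃ e ∈ α.allE, α.allE.count e = 1 ∧ v ∈ e

def multOneGraph : SimpleGraph α.V :=
  SimpleGraph.fromEdgeSet {e | e ∈ α.allE ∧ α.allE.count e = 1}

theorem mem_graph_edgeSet {e : Sym2 α.V} : e ∈ α.graph.edgeSet ↔ e ∈ α.allE ∧ ¬ e.IsDiag := by
  rw [graph, edgeSet_fromEdgeSet]
  rfl

theorem card_sub_one_add_card_I :
    Fintype.card α.V - 1 + #α.I = ∑ v ∈ univ.erase α.root, α.weight v := by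
  have hI : (univ.erase α.root).filter (· ∈ α.I) = α.I := by
    ext v
    simp only [I, mem_filter, mem_erase, mem_univ, and_true, true_and, and_iff_right_iff_imp]
    exact And.left
  have hsplit := card_filter_add_card_filter_not (s := univ.erase α.root) (· ∈ α.I)
  rw [hI, card_erase_of_mem (mem_univ _), card_univ] at hsplit
  simp only [weight, sum_ite, sum_const, hI, smul_eq_mul]
  omega

theorem weight_le_count (hf : α.graph.IsParentMap α.root f) {v : α.V} (hv : v ≠ α.root) :
    α.weight v ≤ α.allE.count s(v, f v) := by
  obtain ⟨hmem, hdiag⟩ := α.mem_graph_edgeSet.1 (α.graph.mem_edgeSet.2 (hf v hv).1)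
  unfold weight
  split_ifs with hI
  · simp only [I, mem_filter, mem_univ, true_and] at hI
    exact (hI.2 _ hmem (Sym2.mem_mk_left _ _)).resolve_right hdiag
  · exact Multiset.one_le_count_iff_mem.2 hmem

theorem nE_eq (hf : α.graph.IsParentMap α.root f) :
    α.nE = ∑ v ∈ univ.erase α.root, α.allE.count s(v, f v) +
      ∑ e ∈ α.graph.edgeFinset \ parentEdges α.root f, α.allE.count e +
      ∑ e ∈ α.allE.toFinset.filter Sym2.IsDiag, α.allE.count e + Multiset.card α.edges2 := by
  have hE : α.graph.edgeFinset = α.allE.toFinset.filter (¬ ·.IsDiag) := by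
    ext e
    simp [mem_graph_edgeSet]
  have hparent : ∑ e ∈ parentEdges α.root f, α.allE.count e =
      ∑ v ∈ univ.erase α.root, α.allE.count s(v, f v) :=
    sum_image fun v hv w hw => hf.injOn_edge (ne_of_mem_erase hv) (ne_of_mem_erase hw)
  rw [← hparent, add_comm (∑ e ∈ parentEdges α.root f, _), sum_sdiff hf.parentEdges_subset, hE,
    sum_filter_not_add_sum_filter, Multiset.toFinset_sum_count_eq, nE, allE, Multiset.card_add]
  ring

theorem Dval_nonpos (hf : α.graph.IsParentMap α.root f) : α.Dval ≤ 0 := by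
  have h1 := α.card_sub_one_add_card_I
  have h2 := α.nE_eq hf
  have h3 := sum_le_sum (s := univ.erase α.root) fun v hv =>
    α.weight_le_count hf (ne_of_mem_erase hv)
  unfold Dval
  omega

theorem Dval_eq_zero_iff (hf : α.graph.IsParentMap α.root f) :
    α.Dval = 0 ↔ (∀ v ≠ α.root, α.allE.count s(v, f v) = α.weight v) ∧
      parentEdges α.root f = α.graph.edgeFinset ∧ (∀ e ∈ α.allE, ¬ e.IsDiag) ∧ α.edges2 = 0 := by
  have hle : ∀ v ∈ univ.erase α.root, α.weight v ≤ α.allE.count s(v, f v) :=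
    fun v hv => α.weight_le_count hf (ne_of_mem_erase hv)
  have h1 := α.card_sub_one_add_card_I
  have h2 := α.nE_eq hf
  have h3 := sum_le_sum hle
  have hV : 0 < Fintype.card α.V := Fintype.card_pos_iff.2 ⟨α.root⟩
  have hsum : α.Dval = 0 ↔
      ∑ v ∈ univ.erase α.root, α.weight v = ∑ v ∈ univ.erase α.root, α.allE.count s(v, f v) ∧
      ∑ e ∈ α.graph.edgeFinset \ parentEdges α.root f, α.allE.count e = 0 ∧
      ∑ e ∈ α.allE.toFinset.filter Sym2.IsDiag, α.allE.count e = 0 ∧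
      Multiset.card α.edges2 = 0 := by
    unfold Dval
    exact ⟨fun h => ⟨by omega, by omega, by omega, by omega⟩, fun ⟨_, _, _, _⟩ => by omega⟩
  rw [hsum, sum_eq_sum_iff_of_le hle, sum_eq_zero_iff, sum_eq_zero_iff, Multiset.card_eq_zero]
  refine and_congr ?_ (and_congr ?_ (and_congr ?_ Iff.rfl))
  · simp [eq_comm]
  · constructor
    · intro h
      refine hf.parentEdges_subset.antisymm fun e he => by_contra fun hP => ?_
      exact Multiset.count_eq_zero.1 (h e (mem_sdiff.2 ⟨he, hP⟩))
        (α.mem_graph_edgeSet.1 (mem_edgeFinset.1 he)).1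
    · intro h e he
      simp [h] at he
  · simp only [mem_filter, Multiset.mem_toFinset, Multiset.count_eq_zero]
    exact ⟨fun h e he hd => h e ⟨he, hd⟩ he, fun h e he => (h e he.1 he.2).elim⟩

theorem notMem_I_iff (hdiag : ∀ e ∈ α.allE, ¬ e.IsDiag) {v : α.V} (hv : v ≠ α.root) :
    v ∉ α.I ↔ α.OnMultOneEdge v := by
  simp only [I, mem_filter, mem_univ, true_and, hv, ne_eq, not_false_eq_true, OnMultOneEdge]
  push Not
  constructor
  · rintro ⟨e, he, hve, hc, -⟩
    exact ⟨e, he, by have := Multiset.one_le_count_iff_mem.2 he; omega, hve⟩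
  · rintro ⟨e, he, hc, hve⟩
    exact ⟨e, he, hve, by omega, hdiag e he⟩

theorem weight_eq_one_of_onMultOneEdge (hdiag : ∀ e ∈ α.allE, ¬ e.IsDiag) {v : α.V}
    (hv : v ≠ α.root) (hs : α.OnMultOneEdge v) : α.weight v = 1 :=
  if_neg ((α.notMem_I_iff hdiag hv).2 hs)

theorem onMultOneEdge_root_and_reachable (hf : α.graph.IsParentMap α.root f)
    (htight : ∀ v ≠ α.root, α.allE.count s(v, f v) = α.weight v)
    (hdiag : ∀ e ∈ α.allE, ¬ e.IsDiag) {v : α.V} (hv : α.OnMultOneEdge v) :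
    α.OnMultOneEdge α.root ∧ α.multOneGraph.Reachable v α.root := by
  induction hd : α.graph.dist v α.root using Nat.strong_induction_on generalizing v with
  | _ n ih =>
    by_cases hvr : v = α.root
    · subst hvr
      exact ⟨hv, .rfl⟩
    obtain ⟨hadj, hdist⟩ := hf v hvr
    have hc : α.allE.count s(v, f v) = 1 :=
      (htight v hvr).trans (α.weight_eq_one_of_onMultOneEdge hdiag hvr hv)
    have hmem : s(v, f v) ∈ α.allE := Multiset.count_pos.1 (by omega)
    obtain ⟨hroot, hreach⟩ :=
      ih _ (by omega) ⟨s(v, f v), hmem, hc, Sym2.mem_mk_right _ _⟩ rfl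
    have hadj' : α.multOneGraph.Adj v (f v) :=
      (fromEdgeSet_adj _).2 ⟨⟨hmem, hc⟩, hadj.ne⟩
    exact ⟨hroot, hadj'.reachable.trans hreach⟩

theorem count_parent_eq_one (hf : α.graph.IsParentMap α.root f) (hT : α.graph.IsTree)
    {v : α.V} (hv : v ≠ α.root) (hreach : α.multOneGraph.Reachable v α.root) :
    α.allE.count s(v, f v) = 1 := by
  obtain ⟨p, hp⟩ := hreach.exists_isPath
  have hle : α.multOneGraph ≤ α.graph := fromEdgeSet_mono fun e he => he.1
  have hmem := hf.mem_edges_of_isTree hT hv ((Walk.isPath_mapLe hle).2 hp)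
  rw [Walk.edges_mapLe_eq_edges] at hmem
  have hedge := p.edges_subset_edgeSet hmem
  rw [multOneGraph, edgeSet_fromEdgeSet] at hedge
  exact hedge.1.2

theorem count_parent_eq_weight_iff (hf : α.graph.IsParentMap α.root f) (hT : α.graph.IsTree)
    (hdiag : ∀ e ∈ α.allE, ¬ e.IsDiag) :
    (∀ v ≠ α.root, α.allE.count s(v, f v) = α.weight v) ↔
      (∀ e ∈ α.allE, α.allE.count e ≤ 2) ∧
      ((∀ e ∈ α.allE, α.allE.count e ≠ 1) ∨
        (α.OnMultOneEdge α.root ∧ ∀ v w, α.OnMultOneEdge v → α.OnMultOneEdge w →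
          α.multOneGraph.Reachable v w)) := by
  constructor
  · intro htight
    refine ⟨fun e he => ?_, ?_⟩
    · have heE : e ∈ parentEdges α.root f := by
        rw [(hf.isTree_iff hT.connected).1 hT, mem_edgeFinset, mem_graph_edgeSet]
        exact ⟨he, hdiag e he⟩
      obtain ⟨v, hv, rfl⟩ := mem_image.1 heE
      rw [htight v (ne_of_mem_erase hv), weight]
      split_ifs <;> omega
    · by_cases hs : ∀ e ∈ α.allE, α.allE.count e ≠ 1
      · exact .inl hs
      push Not at hs
      obtain ⟨e, he, hc⟩ := hs
      have hreach := fun {v} (hv : α.OnMultOneEdge v) =>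
        α.onMultOneEdge_root_and_reachable hf htight hdiag hv
      refine .inr ⟨(hreach ⟨e, he, hc, Sym2.out_fst_mem e⟩).1, fun v w hv hw => ?_⟩
      exact (hreach hv).2.trans (hreach hw).2.symm
  · rintro ⟨hle, hs⟩ v hv
    have hmem := (α.mem_graph_edgeSet.1 (α.graph.mem_edgeSet.2 (hf v hv).1)).1
    by_cases hI : v ∈ α.I
    · have hge := α.weight_le_count hf hv
      have hle' := hle _ hmem
      rw [weight, if_pos hI] at hge ⊢
      omega
    · have hsv := (α.notMem_I_iff hdiag hv).1 hI
      rw [weight, if_neg hI]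
      rcases hs with hs | ⟨hroot, hreach⟩
      · obtain ⟨e, he, hc, -⟩ := hsv
        exact (hs e he hc).elim
      · exact α.count_parent_eq_one hf hT hv (hreach v α.root hsv hroot)

end Diagram

theorem statement_12_general (α : Diagram) (hconn : α.Conn) :
    (NegligibleTerm (fun _ => (1 : ℝ)) α ∨ Order1Term (fun _ => (1 : ℝ)) α) ∧
    (Order1Term (fun _ => (1 : ℝ)) α ↔
      ((∀ e ∈ α.allE, α.allE.count e ≤ 2) ∧
        α.graph.IsAcyclic ∧
        ((∀ e ∈ α.allE, α.allE.count e ≠ 1) ∨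
          ((∃ e ∈ α.allE, α.allE.count e = 1 ∧ α.root ∈ e) ∧
            ∀ v w : α.V, (∃ e ∈ α.allE, α.allE.count e = 1 ∧ v ∈ e) →
              (∃ e ∈ α.allE, α.allE.count e = 1 ∧ w ∈ e) →
              (SimpleGraph.fromEdgeSet {e | e ∈ α.allE ∧ α.allE.count e = 1}).Reachable v w)) ∧
        ((∀ e ∈ α.allE, ¬ e.IsDiag) ∧ α.edges2 = 0))) := by
  obtain ⟨f, hf⟩ := SimpleGraph.Connected.exists_isParentMap hconn α.root
  refine ⟨?_, ?_⟩
  · rw [negligibleTerm_one_iff, order1Term_one_iff]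
    have := α.Dval_nonpos hf
    omega
  · rw [order1Term_one_iff, α.Dval_eq_zero_iff hf, ← hf.isTree_iff hconn]
    constructor
    · rintro ⟨htight, hT, hdiag, h2⟩
      obtain ⟨hle, hs⟩ := (α.count_parent_eq_weight_iff hf hT hdiag).1 htight
      exact ⟨hle, hT.isAcyclic, hs, hdiag, h2⟩
    · rintro ⟨hle, hacyc, hs, hdiag, h2⟩
      have hT : α.graph.IsTree := ⟨hconn, hacyc⟩
      exact ⟨(α.count_parent_eq_weight_iff hf hT hdiag).2 ⟨hle, hs⟩, hT, hdiag, h2⟩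

/-- classification of connected diagrams of combinatorial order 1. -/
theorem statement_12 (α : Diagram) (hconn : α.Conn) (hni : α.NoIsolated) :
    (NegligibleTerm (fun _ => (1 : ℝ)) α ∨ Order1Term (fun _ => (1 : ℝ)) α) ∧
    (Order1Term (fun _ => (1 : ℝ)) α ↔
      ((∀ e ∈ α.allE, α.allE.count e ≤ 2) ∧
        α.graph.IsAcyclic ∧
        ((∀ e ∈ α.allE, α.allE.count e ≠ 1) ∨
          ((∃ e ∈ α.allE, α.allE.count e = 1 ∧ α.root ∈ e) ∧
            ∀ v w : α.V, (∃ e ∈ α.allE, α.allE.count e = 1 ∧ v ∈ e) →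
              (∃ e ∈ α.allE, α.allE.count e = 1 ∧ w ∈ e) →
              (SimpleGraph.fromEdgeSet {e | e ∈ α.allE ∧ α.allE.count e = 1}).Reachable v w)) ∧
        ((∀ e ∈ α.allE, ¬ e.IsDiag) ∧ α.edges2 = 0))) :=
  statement_12_general α hconn
end
end
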